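/- arXiv:2008.00828 — 2 statements merged into one kernel-verified Lean document; each statement's English description precedes it below -/
import Mathlib

section
/- The point (N, 0, 0, 0, 0) is an equilibrium of the SEIAR system, and the characteristic polynomial of the Jacobian matrix of the SEIAR system evaluated at (N, 0, 0, 0, 0) factors as (λ+μ)² · P(λ), where P(λ) = λ³ + (γ_I + γ_A + k + 3μ)λ² + [(k+μ)(γ_I+γ_A+2μ) + (γ_I+μ)(γ_A+μ) − Nk(β_I(1−q) + β_A q)]λ + (k+μ)(γ_I+μ)(γ_A+μ) − Nk(β_I(1−q)(γ_A+μ) + β_A q(γ_I+μ)). -/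
/-!
At the disease-free equilibrium the infection terms `β S I` linearize to `β N I`, and the
susceptible and recovered compartments feed back into no other compartment, so their columns of
the Jacobian vanish off the diagonal. Laplace expansion along these two columns splits off
`(λ + μ)²`; the cubic is the characteristic polynomial of the block of the infected
compartments `E, I, A`.
-/

open Matrix Polynomial

theorem fderiv_apply_apply_single {ι : Type*} [Fintype ι] [DecidableEq ι] (x : ι → ℝ) (i j : ι) :
    fderiv ℝ (fun y : ι → ℝ => y i) x (Pi.single j 1) = if i = j then 1 else 0 := by
  rw [(hasFDerivAt_apply i x).fderiv]
  exact Pi.single_apply j 1 i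

namespace Matrix

variable {R : Type*} [CommRing R]

theorem charmatrix_submatrix {m n : Type*} [Fintype m] [DecidableEq m] [Fintype n] [DecidableEq n]
    (A : Matrix n n R) {e : m → n} (he : Function.Injective e) :
    (A.submatrix e e).charmatrix = A.charmatrix.submatrix e e := by
  ext a b
  by_cases h : a = b <;> simp [h, he.ne_iff]

theorem charpoly_eq_mul_charpoly_submatrix_of_col_eq_zero {n : ℕ}
    (A : Matrix (Fin (n + 1)) (Fin (n + 1)) R) (j : Fin (n + 1)) (hA : ∀ i, i ≠ j → A i j = 0) :
    A.charpoly = (X - C (A j j)) * (A.submatrix j.succAbove j.succAbove).charpoly := by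
  rw [charpoly, det_succ_column _ j, Finset.sum_eq_single j]
  · simp [charmatrix_submatrix _ Fin.succAbove_right_injective, charpoly, ← two_mul]
  · intro i _ hij
    simp [hij, hA i hij]
  · simp

end Matrix

section SEIAR

variable (N μ βI βA k γI γA q : ℝ)

def seiarField (x : Fin 5 → ℝ) : Fin 5 → ℝ :=
  ![μ * N - βI * x 0 * x 2 - βA * x 0 * x 3 - μ * x 0,
    βI * x 0 * x 2 + βA * x 0 * x 3 - (k + μ) * x 1,
    k * (1 - q) * x 1 - (γI + μ) * x 2,
    k * q * x 1 - (γA + μ) * x 3,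
    γI * x 2 + γA * x 3 - μ * x 4]

def seiarJacobianDiseaseFree : Matrix (Fin 5) (Fin 5) ℝ :=
  !![-μ, 0, -(βI * N), -(βA * N), 0;
     0, -(k + μ), βI * N, βA * N, 0;
     0, k * (1 - q), -(γI + μ), 0, 0;
     0, k * q, 0, -(γA + μ), 0;
     0, 0, γI, γA, -μ]

def seiarInfectedBlock : Matrix (Fin 3) (Fin 3) ℝ :=
  !![-(k + μ), βI * N, βA * N;
     k * (1 - q), -(γI + μ), 0;
     k * q, 0, -(γA + μ)]

theorem seiarField_diseaseFree : seiarField N μ βI βA k γI γA q ![N, 0, 0, 0, 0] = 0 := by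
  funext i
  fin_cases i <;> simp [seiarField]

theorem jacobian_seiarField_diseaseFree :
    Matrix.of (fun i j => fderiv ℝ (fun x => seiarField N μ βI βA k γI γA q x i)
      ![N, 0, 0, 0, 0] (Pi.single j 1)) = seiarJacobianDiseaseFree N μ βI βA k γI γA q := by
  ext i j
  fin_cases i <;> fin_cases j <;>
    simp (disch := fun_prop) [seiarField, seiarJacobianDiseaseFree, fderiv_fun_sub,
      fderiv_fun_add, fderiv_fun_mul, fderiv_apply_apply_single]

theorem charpoly_seiarJacobianDiseaseFree :
    (seiarJacobianDiseaseFree N μ βI βA k γI γA q).charpoly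
      = (X + C μ) ^ 2 * (seiarInfectedBlock N μ βI βA k γI γA q).charpoly := by
  set J := seiarJacobianDiseaseFree N μ βI βA k γI γA q
  set J' := J.submatrix (Fin.succAbove 0) (Fin.succAbove 0)
  have hS : ∀ i, i ≠ 0 → J i 0 = 0 := by
    intro i hi
    fin_cases i <;> simp_all [J, seiarJacobianDiseaseFree]
  have hR : ∀ i, i ≠ 3 → J' i 3 = 0 := by
    intro i hi
    fin_cases i <;> simp_all [J', J, seiarJacobianDiseaseFree]
  have hI : J'.submatrix (Fin.succAbove 3) (Fin.succAbove 3)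
      = seiarInfectedBlock N μ βI βA k γI γA q := by
    ext i j
    fin_cases i <;> fin_cases j <;> rfl
  have hSS : J 0 0 = -μ := rfl
  have hRR : J' 3 3 = -μ := rfl
  rw [charpoly_eq_mul_charpoly_submatrix_of_col_eq_zero J 0 hS,
    charpoly_eq_mul_charpoly_submatrix_of_col_eq_zero J' 3 hR, hI, hSS, hRR, map_neg,
    sub_neg_eq_add]
  ring

theorem charpoly_seiarInfectedBlock :
    (seiarInfectedBlock N μ βI βA k γI γA q).charpoly =
      X ^ 3 + C (γI + γA + k + 3 * μ) * X ^ 2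
        + C ((k + μ) * (γI + γA + 2 * μ) + (γI + μ) * (γA + μ)
              - N * k * (βI * (1 - q) + βA * q)) * X
        + C ((k + μ) * (γI + μ) * (γA + μ)
              - N * k * (βI * (1 - q) * (γA + μ) + βA * q * (γI + μ))) := by
  rw [charpoly, det_fin_three]
  simp only [seiarInfectedBlock, charmatrix_apply_eq, charmatrix_apply_ne, ne_eq, Fin.reduceEq,
    not_false_eq_true, of_apply, cons_val', cons_val_zero, cons_val_one, cons_val, cons_val_fin_one,
    map_add, map_sub, map_mul, map_neg, map_one, map_zero, map_ofNat]
  ring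

end SEIAR

theorem seiar_jacobian_dfe_charpoly_general
    (N μ βI βA k γI γA q : ℝ)
    (F : (Fin 5 → ℝ) → Fin 5 → ℝ)
    (hF : F = fun x => ![μ * N - βI * x 0 * x 2 - βA * x 0 * x 3 - μ * x 0,
                         βI * x 0 * x 2 + βA * x 0 * x 3 - (k + μ) * x 1,
                         k * (1 - q) * x 1 - (γI + μ) * x 2,
                         k * q * x 1 - (γA + μ) * x 3,
                         γI * x 2 + γA * x 3 - μ * x 4])
    (x₀ : Fin 5 → ℝ) (hx₀ : x₀ = ![N, 0, 0, 0, 0])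
    (J : Matrix (Fin 5) (Fin 5) ℝ)
    (hJ : J = Matrix.of fun i j => fderiv ℝ (fun x => F x i) x₀ (Pi.single j 1)) :
    F x₀ = 0 ∧
    J.charpoly = (X + C μ) ^ 2 *
      (X ^ 3 + C (γI + γA + k + 3 * μ) * X ^ 2
        + C ((k + μ) * (γI + γA + 2 * μ) + (γI + μ) * (γA + μ)
              - N * k * (βI * (1 - q) + βA * q)) * X
        + C ((k + μ) * (γI + μ) * (γA + μ)
              - N * k * (βI * (1 - q) * (γA + μ) + βA * q * (γI + μ)))) := by
  have hF' : F = seiarField N μ βI βA k γI γA q := hF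
  subst hF' hx₀ hJ
  refine ⟨seiarField_diseaseFree .., ?_⟩
  rw [jacobian_seiarField_diseaseFree, charpoly_seiarJacobianDiseaseFree,
    charpoly_seiarInfectedBlock]

/-- The point `(N,0,0,0,0)` is an equilibrium of the SEIAR system, and the characteristic
polynomial of the Jacobian matrix (the matrix of partial derivatives of the right-hand
sides) of the SEIAR system at `(N,0,0,0,0)` factors as `(λ + μ)² · P(λ)` with the cubic
`P` as in the paper. -/
theorem seiar_jacobian_dfe_charpoly
    (N μ βI βA k γI γA q : ℝ)
    (hN : 0 < N) (hμ : 0 < μ) (hβI : 0 < βI) (hβA : 0 < βA)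
    (hk : 0 < k) (hγI : 0 < γI) (hγA : 0 < γA)
    (hq0 : 0 ≤ q) (hq1 : q ≤ 1)
    (F : (Fin 5 → ℝ) → Fin 5 → ℝ)
    (hF : F = fun x => ![μ * N - βI * x 0 * x 2 - βA * x 0 * x 3 - μ * x 0,
                         βI * x 0 * x 2 + βA * x 0 * x 3 - (k + μ) * x 1,
                         k * (1 - q) * x 1 - (γI + μ) * x 2,
                         k * q * x 1 - (γA + μ) * x 3,
                         γI * x 2 + γA * x 3 - μ * x 4])
    (x₀ : Fin 5 → ℝ) (hx₀ : x₀ = ![N, 0, 0, 0, 0])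
    (J : Matrix (Fin 5) (Fin 5) ℝ)
    (hJ : J = Matrix.of fun i j => fderiv ℝ (fun x => F x i) x₀ (Pi.single j 1)) :
    F x₀ = 0 ∧
    J.charpoly = (X + C μ) ^ 2 *
      (X ^ 3 + C (γI + γA + k + 3 * μ) * X ^ 2
        + C ((k + μ) * (γI + γA + 2 * μ) + (γI + μ) * (γA + μ)
              - N * k * (βI * (1 - q) + βA * q)) * X
        + C ((k + μ) * (γI + μ) * (γA + μ)
              - N * k * (βI * (1 - q) * (γA + μ) + βA * q * (γI + μ)))) :=
  seiar_jacobian_dfe_charpoly_general N μ βI βA k γI γA q F hF x₀ hx₀ J hJ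
end

section
/- For all positive reals S, E, I, A, S*, E*, I*, A* satisfying the endemic steady state relations μN = β_I S*I* + β_A S*A* + μS*, β_I S*I* + β_A S*A* = (k+μ)E*, k(1−q)E* = (γ_I+μ)I*, and kqE* = (γ_A+μ)A*, if differentiable positive functions S, E, I, A satisfy the first four SEIAR equations, then the function V₂ = (S − S* − S* ln(S/S*)) + (E − E* − E* ln(E/E*)) + (β_I S*/(γ_I+μ))(I − I* − I* ln(I/I*)) + (β_A S*/(γ_A+μ))(A − A* − A* ln(A/A*)) satisfies V₂' = −μS*(S/S* + S*/S − 2) − β_I S*I*(S*/S + (S/S*)(I/I*)(E*/E) + (I*/I)(E/E*) − 3) − β_A S*A*(S*/S + (S/S*)(A/A*)(E*/E) + (A*/A)(E/E*) − 3), and in particular V₂' ≤ 0, with V₂' = 0 if and only if (S, E, I, A) = (S*, E*, I*, A*). -/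
/-!
Along a solution, each term `x - x* - x* log (x / x*)` of `V₂` has derivative `x' (1 - x*/x)`.
Substituting the equations and eliminating `N`, `k + μ`, `γ_I + μ`, `γ_A + μ` through the
equilibrium relations gives the stated formula: a negative combination of `a/b + b/a - 2` and of
two sums `u + v + w - 3` with `u v w = 1`, all nonnegative by AM-GM. So `V₂' ≤ 0`, and `V₂' = 0`
exactly when `S = S*` and `(E, I, A) = r (E*, I*, A*)` for some `r > 0`.

That `r = 1` uses the whole past of the solution, which is positive on all of `ℝ`. Suppose the
solution sits at `(S*, r E*, r I*, r A*)` at time `t₀` with `r ≠ 1`. Backwards in time, the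
deviations from this point, scaled by `r - 1`, obey a cooperative system with nonnegative
forcing: if the `E`-deviation is nonnegative on `[a, t₀]` then so are the others, and then a
deviation that is positive at some time grows at least exponentially further back. The `E`-deviation starts positive just
before `t₀` (its first derivative vanishes there, its second is positive), so a continuous
induction keeps it nonnegative on `(-∞, t₀]`. Its growth makes `E` negative when `r > 1`, that
of the `S`-deviation makes `S` negative when `r < 1`.
-/

open Set Filter Topology Real

noncomputable section

section Comparison

variable {f g : ℝ → ℝ} {c a b : ℝ}

theorem mul_exp_le_of_hasDerivAt_neg_mul_sub
    (hf : ∀ t ∈ Icc a b, HasDerivAt f (-c * f t - g t) t) (hg : ∀ t ∈ Icc a b, 0 ≤ g t)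
    {t : ℝ} (ht : t ∈ Icc a b) : f b * exp (c * (b - t)) ≤ f t := by
  have hF : ∀ s ∈ Icc a b, HasDerivAt (fun s => f s * exp (c * s)) (-g s * exp (c * s)) s :=
    fun s hs => ((hf s hs).fun_mul ((hasDerivAt_id' s).const_mul c).exp).congr_deriv (by ring)
  have hanti : AntitoneOn (fun s => f s * exp (c * s)) (Icc a b) := by
    apply antitoneOn_of_deriv_nonpos (convex_Icc a b)
    · exact fun s hs => (hF s hs).continuousAt.continuousWithinAt
    · exact fun s hs => (hF s (interior_subset hs)).differentiableAt.differentiableWithinAt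
    · intro s hs
      rw [(hF s (interior_subset hs)).deriv, neg_mul]
      exact neg_nonpos.2 (mul_nonneg (hg s (interior_subset hs)) (exp_pos _).le)
  calc f b * exp (c * (b - t)) = f b * exp (c * b) * exp (-(c * t)) := by
        rw [mul_assoc, ← exp_add]; ring_nf
    _ ≤ f t * exp (c * t) * exp (-(c * t)) :=
        mul_le_mul_of_nonneg_right (hanti ht (right_mem_Icc.2 (ht.1.trans ht.2)) ht.2)
          (exp_pos _).le
    _ = f t := by rw [mul_assoc, ← exp_add]; simp

theorem nonneg_of_hasDerivAt_neg_mul_sub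
    (hf : ∀ t ∈ Icc a b, HasDerivAt f (-c * f t - g t) t) (hg : ∀ t ∈ Icc a b, 0 ≤ g t)
    (hb : 0 ≤ f b) : ∀ t ∈ Icc a b, 0 ≤ f t :=
  fun _ ht => (mul_nonneg hb (exp_pos _).le).trans (mul_exp_le_of_hasDerivAt_neg_mul_sub hf hg ht)

theorem tendsto_atBot_atTop_of_mul_exp_le {C : ℝ} (hC : 0 < C) (hc : 0 < c)
    (hf : ∀ t ≤ b, C * exp (c * (b - t)) ≤ f t) : Tendsto f atBot atTop := by
  have hlin : Tendsto (fun t => c * (b - t)) atBot atTop :=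
    (tendsto_const_mul_atTop_of_pos hc).2
      (tendsto_atTop_add_const_left _ b tendsto_neg_atBot_atTop)
  exact tendsto_atTop_mono' _ ((eventually_le_atBot b).mono hf)
    ((tendsto_exp_atTop.comp hlin).const_mul_atTop hC)

theorem Continuous.forall_le_nonneg_of_induction (hf : Continuous f) {t₁ t₀ : ℝ}
    (h₁ : ∀ t ∈ Icc t₁ t₀, 0 ≤ f t)
    (hstep : ∀ a ≤ t₁, (∀ t ∈ Icc a t₀, 0 ≤ f t) → 0 < f a) : ∀ t ≤ t₀, 0 ≤ f t := by
  by_contra! ⟨a, ha, hfa⟩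
  have hat₁ : a < t₁ := by
    by_contra! h
    exact (h₁ a ⟨h, ha⟩).not_gt hfa
  set Z := Icc a t₁ ∩ {t | f t ≤ 0}
  have hZ : IsClosed Z := isClosed_Icc.inter (isClosed_le hf continuous_const)
  have hZbdd : BddAbove Z := bddAbove_Icc.mono inter_subset_left
  obtain ⟨⟨ham, hmt₁⟩, hfm⟩ : sSup Z ∈ Z := hZ.csSup_mem ⟨a, ⟨le_rfl, hat₁.le⟩, hfa.le⟩ hZbdd
  set m := sSup Z
  have hpos : ∀ t ∈ Ioc m t₁, 0 < f t := fun t ht => by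
    by_contra! h
    exact ht.1.not_ge (le_csSup hZbdd ⟨⟨ham.trans ht.1.le, ht.2⟩, h⟩)
  have hmt₁' : m < t₁ := hmt₁.lt_of_ne fun h => (h ▸ hfm).not_gt (hstep t₁ le_rfl h₁)
  have hfm₀ : 0 ≤ f m := ge_of_tendsto ((hf.tendsto m).mono_left nhdsWithin_le_nhds)
    (eventually_of_mem (Ioo_mem_nhdsGT hmt₁') fun t ht => (hpos t ⟨ht.1, ht.2.le⟩).le)
  refine (hstep m hmt₁ fun t ht => ?_).not_ge hfm
  rcases le_or_gt t t₁ with h | h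
  · rcases ht.1.eq_or_lt with rfl | h'
    · exact hfm₀
    · exact (hpos t ⟨h', h⟩).le
  · exact h₁ t ⟨h.le, ht.2⟩

end Comparison

theorem HasDerivAt.eventually_nhdsLT_gt {f : ℝ → ℝ} {f' x : ℝ} (hf : HasDerivAt f f' x)
    (hf' : f' < 0) : ∀ᶠ y in 𝓝[<] x, f x < f y := by
  have hslope : ∀ᶠ y in 𝓝[<] x, slope f x y < 0 :=
    ((hasDerivAt_iff_tendsto_slope.1 hf).mono_left (nhdsLT_le_nhdsNE x)).eventually_lt_const hf'
  filter_upwards [hslope, self_mem_nhdsWithin] with y hy (hyx : y < x)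
  rw [slope_def_field, div_neg_iff] at hy
  rcases hy with h | h <;> linarith [h.1, h.2]

theorem three_le_add_add_of_mul_eq_one {u v w : ℝ} (hu : 0 < u) (hv : 0 < v) (hw : 0 < w)
    (h : u * v * w = 1) : 3 ≤ u + v + w := by
  nlinarith [sq_nonneg (u - v), sq_nonneg (v - w), sq_nonneg (u - w), mul_pos hu hv,
    mul_pos hv hw, mul_pos hu hw, sq_nonneg (u + v + w - 3)]

theorem three_le_ratio_cycle {a a₀ b b₀ c c₀ : ℝ} (ha : 0 < a) (ha₀ : 0 < a₀) (hb : 0 < b)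
    (hb₀ : 0 < b₀) (hc : 0 < c) (hc₀ : 0 < c₀) :
    3 ≤ a₀ / a + a / a₀ * (b / b₀) * (c₀ / c) + b₀ / b * (c / c₀) :=
  three_le_add_add_of_mul_eq_one (by positivity) (by positivity) (by positivity) (by field_simp)

theorem two_le_div_add_div {a b : ℝ} (ha : 0 < a) (hb : 0 < b) : 2 ≤ a / b + b / a := by
  rw [div_add_div _ _ hb.ne' ha.ne', le_div_iff₀ (by positivity)]
  nlinarith [sq_nonneg (a - b)]

theorem div_add_div_eq_two_iff {a b : ℝ} (ha : 0 < a) (hb : 0 < b) :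
    a / b + b / a = 2 ↔ a = b := by
  rw [div_add_div _ _ hb.ne' ha.ne', div_eq_iff (by positivity)]
  constructor
  · intro h
    nlinarith [sq_nonneg (a - b)]
  · rintro rfl
    ring

def volterra (c x : ℝ) : ℝ := x - c - c * log (x / c)

theorem HasDerivAt.volterra {f : ℝ → ℝ} {f' t c : ℝ} (hf : HasDerivAt f f' t) (hft : f t ≠ 0)
    (hc : c ≠ 0) : HasDerivAt (fun s => volterra c (f s)) (f' * (1 - c / f t)) t := by
  refine ((hf.sub_const c).sub (((hf.div_const c).log (div_ne_zero hft hc)).const_mul c))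
    |>.congr_deriv ?_
  field_simp

structure SEIAR where
  N : ℝ
  μ : ℝ
  βI : ℝ
  βA : ℝ
  k : ℝ
  γI : ℝ
  γA : ℝ
  q : ℝ
  μ_pos : 0 < μ
  βI_pos : 0 < βI
  βA_pos : 0 < βA
  k_pos : 0 < k
  q_pos : 0 < q
  q_lt_one : q < 1

namespace SEIAR

variable (p : SEIAR)

structure EndemicEquilibrium where
  S : ℝ
  E : ℝ
  I : ℝ
  A : ℝ
  S_pos : 0 < S
  E_pos : 0 < E
  I_pos : 0 < I
  A_pos : 0 < A
  balance_S : p.μ * p.N = p.βI * S * I + p.βA * S * A + p.μ * S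
  balance_E : p.βI * S * I + p.βA * S * A = (p.k + p.μ) * E
  balance_I : p.k * (1 - p.q) * E = (p.γI + p.μ) * I
  balance_A : p.k * p.q * E = (p.γA + p.μ) * A

structure Solution where
  S : ℝ → ℝ
  E : ℝ → ℝ
  I : ℝ → ℝ
  A : ℝ → ℝ
  S_pos : ∀ t, 0 < S t
  E_pos : ∀ t, 0 < E t
  I_pos : ∀ t, 0 < I t
  A_pos : ∀ t, 0 < A t
  hasDerivAt_S : ∀ t,
    HasDerivAt S (p.μ * p.N - p.βI * S t * I t - p.βA * S t * A t - p.μ * S t) t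
  hasDerivAt_E : ∀ t,
    HasDerivAt E (p.βI * S t * I t + p.βA * S t * A t - (p.k + p.μ) * E t) t
  hasDerivAt_I : ∀ t, HasDerivAt I (p.k * (1 - p.q) * E t - (p.γI + p.μ) * I t) t
  hasDerivAt_A : ∀ t, HasDerivAt A (p.k * p.q * E t - (p.γA + p.μ) * A t) t

namespace EndemicEquilibrium

variable {p} (e : p.EndemicEquilibrium)

def forceOfInfection : ℝ := p.βI * e.I + p.βA * e.A

theorem forceOfInfection_pos : 0 < e.forceOfInfection :=
  add_pos (mul_pos p.βI_pos e.I_pos) (mul_pos p.βA_pos e.A_pos)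

def lyapunov (S E I A : ℝ) : ℝ :=
  volterra e.S S + volterra e.E E + p.βI * e.S / (p.γI + p.μ) * volterra e.I I
    + p.βA * e.S / (p.γA + p.μ) * volterra e.A A

def lyapunovDeriv (S E I A : ℝ) : ℝ :=
  -(p.μ * e.S) * (S / e.S + e.S / S - 2)
    - p.βI * e.S * e.I * (e.S / S + S / e.S * (I / e.I) * (e.E / E) + e.I / I * (E / e.E) - 3)
    - p.βA * e.S * e.A * (e.S / S + S / e.S * (A / e.A) * (e.E / E) + e.A / A * (E / e.E) - 3)

theorem orbitalDeriv_eq_lyapunovDeriv {S E I A : ℝ} (hS : S ≠ 0) (hE : E ≠ 0) (hI : I ≠ 0)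
    (hA : A ≠ 0) :
    (p.μ * p.N - p.βI * S * I - p.βA * S * A - p.μ * S) * (1 - e.S / S)
      + (p.βI * S * I + p.βA * S * A - (p.k + p.μ) * E) * (1 - e.E / E)
      + p.βI * e.S / (p.γI + p.μ) * ((p.k * (1 - p.q) * E - (p.γI + p.μ) * I) * (1 - e.I / I))
      + p.βA * e.S / (p.γA + p.μ) * ((p.k * p.q * E - (p.γA + p.μ) * A) * (1 - e.A / A))
      = e.lyapunovDeriv S E I A := by
  have := e.S_pos.ne'
  have := e.E_pos.ne'
  have := e.I_pos.ne'
  have := e.A_pos.ne'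
  have := p.k_pos.ne'
  have := p.q_pos.ne'
  have := (sub_pos.2 p.q_lt_one).ne'
  have hγI : p.γI + p.μ = p.k * (1 - p.q) * e.E / e.I := by
    rw [e.balance_I]; field_simp
  have hγA : p.γA + p.μ = p.k * p.q * e.E / e.A := by
    rw [e.balance_A]; field_simp
  have hkμ : p.k + p.μ = (p.βI * e.S * e.I + p.βA * e.S * e.A) / e.E := by
    rw [e.balance_E]; field_simp
  unfold lyapunovDeriv
  rw [e.balance_S, hγI, hγA, hkμ]
  field_simp
  ring

theorem lyapunovDeriv_terms_nonneg {S E I A : ℝ} (hS : 0 < S) (hE : 0 < E) (hI : 0 < I)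
    (hA : 0 < A) :
    0 ≤ p.μ * e.S * (S / e.S + e.S / S - 2)
      ∧ 0 ≤ p.βI * e.S * e.I
          * (e.S / S + S / e.S * (I / e.I) * (e.E / E) + e.I / I * (E / e.E) - 3)
      ∧ 0 ≤ p.βA * e.S * e.A
          * (e.S / S + S / e.S * (A / e.A) * (e.E / E) + e.A / A * (E / e.E) - 3) :=
  ⟨mul_nonneg (mul_pos p.μ_pos e.S_pos).le (sub_nonneg.2 (two_le_div_add_div hS e.S_pos)),
    mul_nonneg (mul_pos (mul_pos p.βI_pos e.S_pos) e.I_pos).le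
      (sub_nonneg.2 (three_le_ratio_cycle hS e.S_pos hI e.I_pos hE e.E_pos)),
    mul_nonneg (mul_pos (mul_pos p.βA_pos e.S_pos) e.A_pos).le
      (sub_nonneg.2 (three_le_ratio_cycle hS e.S_pos hA e.A_pos hE e.E_pos))⟩

theorem lyapunovDeriv_nonpos {S E I A : ℝ} (hS : 0 < S) (hE : 0 < E) (hI : 0 < I)
    (hA : 0 < A) : e.lyapunovDeriv S E I A ≤ 0 := by
  have := e.lyapunovDeriv_terms_nonneg hS hE hI hA
  unfold lyapunovDeriv
  linarith

theorem lyapunovDeriv_eq_zero_iff {S E I A : ℝ} (hS : 0 < S) (hE : 0 < E) (hI : 0 < I)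
    (hA : 0 < A) :
    e.lyapunovDeriv S E I A = 0 ↔ S = e.S ∧ I * e.E = e.I * E ∧ A * e.E = e.A * E := by
  have hcycle : ∀ {i i₀ : ℝ}, 0 < i → 0 < i₀ →
      (e.S / e.S + e.S / e.S * (i / i₀) * (e.E / E) + i₀ / i * (E / e.E) - 3 = 0 ↔
        i * e.E = i₀ * E) := by
    intro i i₀ hi hi₀
    have := e.S_pos.ne'
    have := e.E_pos
    have hsum : e.S / e.S + e.S / e.S * (i / i₀) * (e.E / E) + i₀ / i * (E / e.E) - 3
        = i * e.E / (i₀ * E) + i₀ * E / (i * e.E) - 2 := by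
      field_simp
      ring
    rw [hsum, sub_eq_zero, div_add_div_eq_two_iff (by positivity) (by positivity)]
  have w₁ := mul_pos p.μ_pos e.S_pos
  have w₂ := mul_pos (mul_pos p.βI_pos e.S_pos) e.I_pos
  have w₃ := mul_pos (mul_pos p.βA_pos e.S_pos) e.A_pos
  constructor
  · intro h
    obtain ⟨h₁, h₂, h₃⟩ := e.lyapunovDeriv_terms_nonneg hS hE hI hA
    unfold lyapunovDeriv at h
    obtain rfl : S = e.S := (div_add_div_eq_two_iff hS e.S_pos).1 <| sub_eq_zero.1 <|
      (mul_eq_zero.1 (by linarith : p.μ * e.S * _ = 0)).resolve_left w₁.ne'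
    exact ⟨rfl,
      (hcycle hI e.I_pos).1 <|
        (mul_eq_zero.1 (by linarith : p.βI * e.S * e.I * _ = 0)).resolve_left w₂.ne',
      (hcycle hA e.A_pos).1 <|
        (mul_eq_zero.1 (by linarith : p.βA * e.S * e.A * _ = 0)).resolve_left w₃.ne'⟩
  · rintro ⟨rfl, hI₀, hA₀⟩
    rw [lyapunovDeriv, (hcycle hI e.I_pos).2 hI₀, (hcycle hA e.A_pos).2 hA₀]
    field_simp
    ring

end EndemicEquilibrium

namespace Solution

variable {p} (x : p.Solution) (e : p.EndemicEquilibrium) (r : ℝ)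

theorem hasDerivAt_lyapunov (t : ℝ) :
    HasDerivAt (fun t => e.lyapunov (x.S t) (x.E t) (x.I t) (x.A t))
      (e.lyapunovDeriv (x.S t) (x.E t) (x.I t) (x.A t)) t := by
  have hv : ∀ {f : ℝ → ℝ} {f' c : ℝ}, HasDerivAt f f' t → (∀ s, 0 < f s) → 0 < c →
      HasDerivAt (fun s => volterra c (f s)) (f' * (1 - c / f t)) t :=
    fun hf hpos hc => hf.volterra (hpos t).ne' hc.ne'
  have h := (((hv (x.hasDerivAt_S t) x.S_pos e.S_pos).add
    (hv (x.hasDerivAt_E t) x.E_pos e.E_pos)).add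
    ((hv (x.hasDerivAt_I t) x.I_pos e.I_pos).const_mul (p.βI * e.S / (p.γI + p.μ)))).add
    ((hv (x.hasDerivAt_A t) x.A_pos e.A_pos).const_mul (p.βA * e.S / (p.γA + p.μ)))
  rwa [e.orbitalDeriv_eq_lyapunovDeriv (x.S_pos t).ne' (x.E_pos t).ne' (x.I_pos t).ne'
    (x.A_pos t).ne'] at h

def AtRayPoint (t₀ : ℝ) : Prop :=
  x.S t₀ = e.S ∧ x.E t₀ = r * e.E ∧ x.I t₀ = r * e.I ∧ x.A t₀ = r * e.A

/- Deviations from `(S*, r E*, r I*, r A*)`, scaled by `r - 1` so that for either sign of `r - 1`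
all four are nonnegative before a time at which the solution passes through that point. -/
def devS (t : ℝ) : ℝ := (r - 1) * (x.S t - e.S)
def devE (t : ℝ) : ℝ := (r - 1) * (r * e.E - x.E t)
def devI (t : ℝ) : ℝ := (r - 1) * (x.I t - r * e.I)
def devA (t : ℝ) : ℝ := (r - 1) * (x.A t - r * e.A)

theorem hasDerivAt_devS (t : ℝ) :
    HasDerivAt (x.devS e r) (-(p.μ + r * e.forceOfInfection) * x.devS e r t
      - ((r - 1) ^ 2 * (p.k + p.μ) * e.E + p.βI * x.S t * x.devI e r t
        + p.βA * x.S t * x.devA e r t)) t := by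
  refine (((x.hasDerivAt_S t).sub_const e.S).const_mul (r - 1)).congr_deriv ?_
  simp only [devS, devI, devA, EndemicEquilibrium.forceOfInfection]
  linear_combination (r - 1) * e.balance_S - (r - 1) ^ 2 * e.balance_E

theorem hasDerivAt_devE (t : ℝ) :
    HasDerivAt (x.devE e r) (-(p.k + p.μ) * x.devE e r t
      - (p.βI * x.S t * x.devI e r t + p.βA * x.S t * x.devA e r t
        + r * e.forceOfInfection * x.devS e r t)) t := by
  refine (((x.hasDerivAt_E t).const_sub (r * e.E)).const_mul (r - 1)).congr_deriv ?_
  simp only [devS, devE, devI, devA, EndemicEquilibrium.forceOfInfection]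
  linear_combination -(r - 1) * r * e.balance_E

theorem hasDerivAt_devI (t : ℝ) :
    HasDerivAt (x.devI e r) (-(p.γI + p.μ) * x.devI e r t - p.k * (1 - p.q) * x.devE e r t) t := by
  refine (((x.hasDerivAt_I t).sub_const (r * e.I)).const_mul (r - 1)).congr_deriv ?_
  simp only [devE, devI]
  linear_combination (r - 1) * r * e.balance_I

theorem hasDerivAt_devA (t : ℝ) :
    HasDerivAt (x.devA e r) (-(p.γA + p.μ) * x.devA e r t - p.k * p.q * x.devE e r t) t := by
  refine (((x.hasDerivAt_A t).sub_const (r * e.A)).const_mul (r - 1)).congr_deriv ?_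
  simp only [devE, devA]
  linear_combination (r - 1) * r * e.balance_A

variable {x e r} {t₀ : ℝ}

theorem AtRayPoint.pos (h₀ : x.AtRayPoint e r t₀) : 0 < r :=
  pos_of_mul_pos_left (h₀.2.1 ▸ x.E_pos t₀) e.E_pos.le

theorem AtRayPoint.dev_eq_zero (h₀ : x.AtRayPoint e r t₀) :
    x.devS e r t₀ = 0 ∧ x.devE e r t₀ = 0 ∧ x.devI e r t₀ = 0 ∧ x.devA e r t₀ = 0 := by
  obtain ⟨hS, hE, hI, hA⟩ := h₀
  simp [devS, devE, devI, devA, hS, hE, hI, hA]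

theorem AtRayPoint.devI_devA_devS_nonneg (h₀ : x.AtRayPoint e r t₀) {a : ℝ}
    (hE : ∀ t ∈ Icc a t₀, 0 ≤ x.devE e r t) :
    ∀ t ∈ Icc a t₀, 0 ≤ x.devI e r t ∧ 0 ≤ x.devA e r t ∧ 0 ≤ x.devS e r t := by
  obtain ⟨hS₀, -, hI₀, hA₀⟩ := h₀.dev_eq_zero
  have := p.k_pos.le
  have := p.q_pos.le
  have := sub_nonneg.2 p.q_lt_one.le
  have hI : ∀ t ∈ Icc a t₀, 0 ≤ x.devI e r t :=
    nonneg_of_hasDerivAt_neg_mul_sub (fun t _ => x.hasDerivAt_devI e r t)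
      (fun t ht => by have := hE t ht; positivity) hI₀.ge
  have hA : ∀ t ∈ Icc a t₀, 0 ≤ x.devA e r t :=
    nonneg_of_hasDerivAt_neg_mul_sub (fun t _ => x.hasDerivAt_devA e r t)
      (fun t ht => by have := hE t ht; positivity) hA₀.ge
  have hS : ∀ t ∈ Icc a t₀, 0 ≤ x.devS e r t :=
    nonneg_of_hasDerivAt_neg_mul_sub (fun t _ => x.hasDerivAt_devS e r t)
      (fun t ht => by
        have := hI t ht; have := hA t ht; have := x.S_pos t; have := p.μ_pos; have := e.E_pos
        have := p.βI_pos; have := p.βA_pos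
        positivity) hS₀.ge
  exact fun t ht => ⟨hI t ht, hA t ht, hS t ht⟩

/-- The start of the bootstrap: `devE` and `devE'` vanish at `t₀`, but `devE'' (t₀) > 0`. -/
theorem AtRayPoint.exists_devE_pos (h₀ : x.AtRayPoint e r t₀) (hr : r ≠ 1) :
    ∃ t₁ < t₀, 0 < x.devE e r t₁ ∧ ∀ t ∈ Icc t₁ t₀, 0 ≤ x.devE e r t := by
  obtain ⟨hS₀, hE₀, hI₀, hA₀⟩ := h₀.dev_eq_zero
  set D : ℝ → ℝ := fun t => -(p.k + p.μ) * x.devE e r t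
    - (p.βI * x.S t * x.devI e r t + p.βA * x.S t * x.devA e r t
      + r * e.forceOfInfection * x.devS e r t)
  have hD : HasDerivAt D (r * e.forceOfInfection * ((r - 1) ^ 2 * (p.k + p.μ) * e.E)) t₀ := by
    refine ((((x.hasDerivAt_devE e r t₀).const_mul _).sub
      (((((x.hasDerivAt_S t₀).const_mul p.βI).mul (x.hasDerivAt_devI e r t₀)).add
        (((x.hasDerivAt_S t₀).const_mul p.βA).mul (x.hasDerivAt_devA e r t₀))).add
        ((x.hasDerivAt_devS e r t₀).const_mul (r * e.forceOfInfection))))).congr_deriv ?_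
    simp only [hS₀, hE₀, hI₀, hA₀]
    ring
  have hD' : 0 < r * e.forceOfInfection * ((r - 1) ^ 2 * (p.k + p.μ) * e.E) := by
    have := h₀.pos; have := e.forceOfInfection_pos; have := sub_ne_zero.2 hr
    have := p.k_pos; have := p.μ_pos; have := e.E_pos
    positivity
  obtain ⟨u, hu : u < t₀, hDneg⟩ :=
    mem_nhdsLT_iff_exists_Ioo_subset.1 (hD.neg.eventually_nhdsLT_gt (neg_neg_of_pos hD'))
  obtain ⟨t₁, hut₁, ht₁⟩ := exists_between hu
  have hanti : StrictAntiOn (x.devE e r) (Icc t₁ t₀) := by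
    refine strictAntiOn_of_deriv_neg (convex_Icc _ _)
      (fun t _ => (x.hasDerivAt_devE e r t).continuousAt.continuousWithinAt) fun t ht => ?_
    rw [interior_Icc] at ht
    rw [(x.hasDerivAt_devE e r t).deriv]
    have : -D t₀ < -D t := hDneg ⟨hut₁.trans ht.1, ht.2⟩
    simp only [D, hS₀, hE₀, hI₀, hA₀] at this ⊢
    linarith
  refine ⟨t₁, ht₁, hE₀ ▸ hanti (left_mem_Icc.2 ht₁.le) (right_mem_Icc.2 ht₁.le) ht₁,
    fun t ht => ?_⟩
  rcases ht.2.lt_or_eq with h | rfl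
  · exact (hE₀ ▸ hanti ht (right_mem_Icc.2 ht₁.le) h).le
  · exact hE₀.ge

theorem AtRayPoint.devE_nonneg (h₀ : x.AtRayPoint e r t₀) (hr : r ≠ 1) :
    ∀ t ≤ t₀, 0 ≤ x.devE e r t := by
  obtain ⟨t₁, ht₁, hpos, hnonneg⟩ := h₀.exists_devE_pos hr
  refine (continuous_iff_continuousAt.2 fun t => (x.hasDerivAt_devE e r t).continuousAt)
    |>.forall_le_nonneg_of_induction hnonneg fun a ha hE => (mul_pos hpos (exp_pos _)).trans_le <|
      mul_exp_le_of_hasDerivAt_neg_mul_sub (fun t _ => x.hasDerivAt_devE e r t)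
        (fun t ht => ?_) ⟨le_rfl, ha⟩
  obtain ⟨hI, hA, hS⟩ := h₀.devI_devA_devS_nonneg hE t ⟨ht.1, ht.2.trans ht₁.le⟩
  have := x.S_pos t; have := h₀.pos; have := p.βI_pos; have := p.βA_pos
  have := e.forceOfInfection_pos
  positivity

theorem AtRayPoint.dev_nonneg (h₀ : x.AtRayPoint e r t₀) (hr : r ≠ 1) {t : ℝ} (ht : t ≤ t₀) :
    0 ≤ x.devI e r t ∧ 0 ≤ x.devA e r t ∧ 0 ≤ x.devS e r t :=
  h₀.devI_devA_devS_nonneg (fun s hs => h₀.devE_nonneg hr s hs.2) t ⟨le_rfl, ht⟩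

theorem AtRayPoint.tendsto_devE (h₀ : x.AtRayPoint e r t₀) (hr : r ≠ 1) :
    Tendsto (x.devE e r) atBot atTop := by
  obtain ⟨t₁, ht₁, hpos, -⟩ := h₀.exists_devE_pos hr
  have := h₀.pos; have := p.βI_pos; have := p.βA_pos; have := e.forceOfInfection_pos
  refine tendsto_atBot_atTop_of_mul_exp_le hpos (add_pos p.k_pos p.μ_pos) fun t ht =>
    mul_exp_le_of_hasDerivAt_neg_mul_sub (fun s _ => x.hasDerivAt_devE e r s)
      (fun s hs => ?_) ⟨le_rfl, ht⟩
  obtain ⟨hI, hA, hS⟩ := h₀.dev_nonneg hr (hs.2.trans ht₁.le)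
  have := x.S_pos s
  positivity

theorem AtRayPoint.tendsto_devS (h₀ : x.AtRayPoint e r t₀) (hr : r ≠ 1) :
    Tendsto (x.devS e r) atBot atTop := by
  obtain ⟨hS₀, -, hI₀, hA₀⟩ := h₀.dev_eq_zero
  have := h₀.pos; have := p.βI_pos; have := p.βA_pos; have := e.forceOfInfection_pos
  have := p.k_pos; have := p.μ_pos; have := e.E_pos; have := sub_ne_zero.2 hr
  have hS' : HasDerivAt (x.devS e r) (-((r - 1) ^ 2 * (p.k + p.μ) * e.E)) t₀ := by
    convert x.hasDerivAt_devS e r t₀ using 1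
    rw [hS₀, hI₀, hA₀]
    ring
  obtain ⟨t₂, hpos, ht₂ : t₂ < t₀⟩ :=
    ((hS'.eventually_nhdsLT_gt (neg_neg_of_pos (by positivity))).and self_mem_nhdsWithin).exists
  rw [hS₀] at hpos
  refine tendsto_atBot_atTop_of_mul_exp_le hpos (by positivity) fun t ht =>
    mul_exp_le_of_hasDerivAt_neg_mul_sub (fun s _ => x.hasDerivAt_devS e r s)
      (fun s hs => ?_) ⟨le_rfl, ht⟩
  obtain ⟨hI, hA, -⟩ := h₀.dev_nonneg hr (hs.2.trans ht₂.le)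
  have := x.S_pos s
  positivity

/-- Backwards in time, `E` becomes negative if `r > 1` and `S` does if `r < 1`. -/
theorem AtRayPoint.eq_one (h₀ : x.AtRayPoint e r t₀) : r = 1 := by
  by_contra hr
  rcases lt_or_gt_of_ne hr with hr₁ | hr₁
  · obtain ⟨t, ht⟩ := ((h₀.tendsto_devS hr).eventually_gt_atTop ((1 - r) * e.S)).exists
    have := x.S_pos t
    simp only [devS] at ht
    nlinarith
  · obtain ⟨t, ht⟩ := ((h₀.tendsto_devE hr).eventually_gt_atTop ((r - 1) * r * e.E)).exists
    have := x.E_pos t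
    simp only [devE] at ht
    nlinarith

variable (x e) in
theorem lyapunovDeriv_eq_zero_iff (t : ℝ) :
    e.lyapunovDeriv (x.S t) (x.E t) (x.I t) (x.A t) = 0 ↔
      x.S t = e.S ∧ x.E t = e.E ∧ x.I t = e.I ∧ x.A t = e.A := by
  rw [e.lyapunovDeriv_eq_zero_iff (x.S_pos t) (x.E_pos t) (x.I_pos t) (x.A_pos t)]
  constructor
  · rintro ⟨hS, hI, hA⟩
    have := e.E_pos.ne'
    have h₀ : x.AtRayPoint e (x.E t / e.E) t :=
      ⟨hS, by field_simp, by field_simp; linarith, by field_simp; linarith⟩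
    have hE : x.E t = e.E := (div_eq_one_iff_eq this).1 h₀.eq_one
    rw [hE] at hI hA
    exact ⟨hS, hE, mul_right_cancel₀ this hI, mul_right_cancel₀ this hA⟩
  · rintro ⟨hS, hE, hI, hA⟩
    exact ⟨hS, by rw [hI, hE], by rw [hA, hE]⟩

end Solution

end SEIAR

end

theorem seiar_lyapunov_endemic_general
    (N μ βI βA k γI γA q : ℝ)
    (hμ : 0 < μ) (hβI : 0 < βI) (hβA : 0 < βA)
    (hk : 0 < k)
    (hq0 : 0 < q) (hq1 : q < 1)
    (Sstar Estar Istar Astar : ℝ)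
    (hSstarpos : 0 < Sstar) (hEstarpos : 0 < Estar)
    (hIstarpos : 0 < Istar) (hAstarpos : 0 < Astar)
    (hrel1 : μ * N = βI * Sstar * Istar + βA * Sstar * Astar + μ * Sstar)
    (hrel2 : βI * Sstar * Istar + βA * Sstar * Astar = (k + μ) * Estar)
    (hrel3 : k * (1 - q) * Estar = (γI + μ) * Istar)
    (hrel4 : k * q * Estar = (γA + μ) * Astar)
    (S E I A : ℝ → ℝ)
    (hSpos : ∀ t : ℝ, 0 < S t) (hEpos : ∀ t : ℝ, 0 < E t)
    (hIpos : ∀ t : ℝ, 0 < I t) (hApos : ∀ t : ℝ, 0 < A t)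
    (hS : ∀ t : ℝ, HasDerivAt S (μ * N - βI * S t * I t - βA * S t * A t - μ * S t) t)
    (hE : ∀ t : ℝ, HasDerivAt E (βI * S t * I t + βA * S t * A t - (k + μ) * E t) t)
    (hI : ∀ t : ℝ, HasDerivAt I (k * (1 - q) * E t - (γI + μ) * I t) t)
    (hA : ∀ t : ℝ, HasDerivAt A (k * q * E t - (γA + μ) * A t) t)
    (V₂ : ℝ → ℝ)
    (hV₂ : V₂ = fun t =>
      (S t - Sstar - Sstar * Real.log (S t / Sstar))
      + (E t - Estar - Estar * Real.log (E t / Estar))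
      + βI * Sstar / (γI + μ) * (I t - Istar - Istar * Real.log (I t / Istar))
      + βA * Sstar / (γA + μ) * (A t - Astar - Astar * Real.log (A t / Astar))) :
    (∀ t : ℝ, HasDerivAt V₂
      (-(μ * Sstar) * (S t / Sstar + Sstar / S t - 2)
       - βI * Sstar * Istar * (Sstar / S t
           + S t / Sstar * (I t / Istar) * (Estar / E t)
           + Istar / I t * (E t / Estar) - 3)
       - βA * Sstar * Astar * (Sstar / S t
           + S t / Sstar * (A t / Astar) * (Estar / E t)
           + Astar / A t * (E t / Estar) - 3)) t) ∧
    (∀ t : ℝ, deriv V₂ t ≤ 0) ∧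
    (∀ t : ℝ, deriv V₂ t = 0 ↔
      S t = Sstar ∧ E t = Estar ∧ I t = Istar ∧ A t = Astar) := by
  let p : SEIAR := ⟨N, μ, βI, βA, k, γI, γA, q, hμ, hβI, hβA, hk, hq0, hq1⟩
  let e : p.EndemicEquilibrium :=
    ⟨Sstar, Estar, Istar, Astar, hSstarpos, hEstarpos, hIstarpos, hAstarpos, hrel1, hrel2, hrel3,
      hrel4⟩
  let x : p.Solution := ⟨S, E, I, A, hSpos, hEpos, hIpos, hApos, hS, hE, hI, hA⟩
  have hV : ∀ t, HasDerivAt V₂ (e.lyapunovDeriv (S t) (E t) (I t) (A t)) t :=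
    hV₂ ▸ x.hasDerivAt_lyapunov e
  refine ⟨hV, fun t => ?_, fun t => ?_⟩ <;> rw [(hV t).deriv]
  · exact e.lyapunovDeriv_nonpos (hSpos t) (hEpos t) (hIpos t) (hApos t)
  · exact x.lyapunovDeriv_eq_zero_iff e t

/-- The Lyapunov function `V₂` for the endemic steady state of the SEIAR model has the
stated derivative along positive solutions, which is nonpositive and vanishes exactly at
the endemic steady state. -/
theorem seiar_lyapunov_endemic
    (N μ βI βA k γI γA q : ℝ)
    (hN : 0 < N) (hμ : 0 < μ) (hβI : 0 < βI) (hβA : 0 < βA)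
    (hk : 0 < k) (hγI : 0 < γI) (hγA : 0 < γA)
    (hq0 : 0 < q) (hq1 : q < 1)
    (Sstar Estar Istar Astar : ℝ)
    (hSstarpos : 0 < Sstar) (hEstarpos : 0 < Estar)
    (hIstarpos : 0 < Istar) (hAstarpos : 0 < Astar)
    (hrel1 : μ * N = βI * Sstar * Istar + βA * Sstar * Astar + μ * Sstar)
    (hrel2 : βI * Sstar * Istar + βA * Sstar * Astar = (k + μ) * Estar)
    (hrel3 : k * (1 - q) * Estar = (γI + μ) * Istar)
    (hrel4 : k * q * Estar = (γA + μ) * Astar)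
    (S E I A : ℝ → ℝ)
    (hSpos : ∀ t : ℝ, 0 < S t) (hEpos : ∀ t : ℝ, 0 < E t)
    (hIpos : ∀ t : ℝ, 0 < I t) (hApos : ∀ t : ℝ, 0 < A t)
    (hS : ∀ t : ℝ, HasDerivAt S (μ * N - βI * S t * I t - βA * S t * A t - μ * S t) t)
    (hE : ∀ t : ℝ, HasDerivAt E (βI * S t * I t + βA * S t * A t - (k + μ) * E t) t)
    (hI : ∀ t : ℝ, HasDerivAt I (k * (1 - q) * E t - (γI + μ) * I t) t)
    (hA : ∀ t : ℝ, HasDerivAt A (k * q * E t - (γA + μ) * A t) t)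
    (V₂ : ℝ → ℝ)
    (hV₂ : V₂ = fun t =>
      (S t - Sstar - Sstar * Real.log (S t / Sstar))
      + (E t - Estar - Estar * Real.log (E t / Estar))
      + βI * Sstar / (γI + μ) * (I t - Istar - Istar * Real.log (I t / Istar))
      + βA * Sstar / (γA + μ) * (A t - Astar - Astar * Real.log (A t / Astar))) :
    (∀ t : ℝ, HasDerivAt V₂
      (-(μ * Sstar) * (S t / Sstar + Sstar / S t - 2)
       - βI * Sstar * Istar * (Sstar / S t
           + S t / Sstar * (I t / Istar) * (Estar / E t)
           + Istar / I t * (E t / Estar) - 3)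
       - βA * Sstar * Astar * (Sstar / S t
           + S t / Sstar * (A t / Astar) * (Estar / E t)
           + Astar / A t * (E t / Estar) - 3)) t) ∧
    (∀ t : ℝ, deriv V₂ t ≤ 0) ∧
    (∀ t : ℝ, deriv V₂ t = 0 ↔
      S t = Sstar ∧ E t = Estar ∧ I t = Istar ∧ A t = Astar) :=
  seiar_lyapunov_endemic_general N μ βI βA k γI γA q hμ hβI hβA hk hq0 hq1 Sstar Estar Istar Astar
    hSstarpos hEstarpos hIstarpos hAstarpos hrel1 hrel2 hrel3 hrel4 S E I A hSpos hEpos hIpos hApos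
    hS hE hI hA V₂ hV₂
end
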